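/- Let E be the (0,1,−1) matrix E = [[J_{k₁,k₂}, −J_{k₁,k₂}, 0],[−J_{k₁,k₂}, J_{k₁,k₂}, 0],[0,0,0]] of rank 1 (with k₁, k₂ > 0), and let A = [[0, J_{k₁,k₂}, X₁],[J_{k₁,k₂}, 0, X₂],[X₃, X₄, Y]] be a (0,1) matrix conformally partitioned with E. Then A and A+E are Gram mates if and only if 𝟙ᵀX₁ = 𝟙ᵀX₂ and X₃𝟙 = X₄𝟙. -/

import Mathlib

/-!
The perturbation `E` has rank one: `E = u vᵀ` with `u = (𝟙, -𝟙, 0)` and `v = (𝟙, -𝟙, 0)`.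
For any real `A`, `(A + u vᵀ)(A + u vᵀ)ᵀ - A Aᵀ = w uᵀ + u wᵀ` with
`w = A v + (|v|² / 2) u`, and for `u ≠ 0` the symmetrised rank-one matrix `w uᵀ + u wᵀ` vanishes
only when `w = 0`. So for `u, v ≠ 0`, `A` and `A + u vᵀ` are Gram mates iff `A v = -(|v|² / 2) u` and
`uᵀ A = -(|u|² / 2) vᵀ`. For the block matrix `A` of the theorem these two conditions read
`X₃ 𝟙 = X₄ 𝟙` and `𝟙ᵀ X₁ = 𝟙ᵀ X₂`.
-/

open Matrix

def AreGramMates {R m n : Type*} [Semiring R] [Fintype m] [Fintype n] (M N : Matrix m n R) :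
    Prop :=
  M * Mᵀ = N * Nᵀ ∧ Mᵀ * M = Nᵀ * N ∧ M ≠ N

section RankOnePerturbation

variable {K : Type*} [Field K] [LinearOrder K] [IsStrictOrderedRing K] {m n : Type*}
  [Fintype m] [Fintype n]

theorem vecMulVec_add_vecMulVec_swap_eq_zero_iff {u w : m → K} (hu : u ≠ 0) :
    vecMulVec w u + vecMulVec u w = 0 ↔ w = 0 := by
  refine ⟨fun h => ?_, fun h => by simp [h]⟩
  have huu : u ⬝ᵥ u ≠ 0 := fun h0 => hu (dotProduct_self_eq_zero.mp h0)
  have hmul : (u ⬝ᵥ u) • w + (w ⬝ᵥ u) • u = 0 := by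
    simpa [add_mulVec, vecMulVec_mulVec, add_comm] using congrArg (· *ᵥ u) h
  have hwu : w ⬝ᵥ u = 0 := by
    have hdot := congrArg (· ⬝ᵥ u) hmul
    simp only [add_dotProduct, smul_dotProduct, smul_eq_mul, zero_dotProduct] at hdot
    have : (2 * (u ⬝ᵥ u)) * (w ⬝ᵥ u) = 0 := by linarith
    simpa [huu] using this
  simpa [hwu, huu] using hmul

theorem add_vecMulVec_mul_transpose_eq_iff (A : Matrix m n K) {u : m → K} (hu : u ≠ 0)
    (v : n → K) :
    (A + vecMulVec u v) * (A + vecMulVec u v)ᵀ = A * Aᵀ ↔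
      A *ᵥ v = -((v ⬝ᵥ v) / 2) • u := by
  have hexpand : (A + vecMulVec u v) * (A + vecMulVec u v)ᵀ =
      A * Aᵀ + (vecMulVec (A *ᵥ v + ((v ⬝ᵥ v) / 2) • u) u +
        vecMulVec u (A *ᵥ v + ((v ⬝ᵥ v) / 2) • u)) := by
    rw [transpose_add, transpose_vecMulVec, Matrix.add_mul, Matrix.mul_add, Matrix.mul_add,
      mul_vecMulVec, vecMulVec_mul, vecMulVec_mul_vecMulVec, vecMul_transpose, add_vecMulVec,
      vecMulVec_add, smul_vecMulVec, vecMulVec_smul, vecMulVec_smul]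
    module
  rw [hexpand, add_eq_left, vecMulVec_add_vecMulVec_swap_eq_zero_iff hu,
    add_eq_zero_iff_eq_neg, neg_smul]

theorem add_vecMulVec_transpose_mul_eq_iff (A : Matrix m n K) (u : m → K) {v : n → K}
    (hv : v ≠ 0) :
    (A + vecMulVec u v)ᵀ * (A + vecMulVec u v) = Aᵀ * A ↔
      u ᵥ* A = -((u ⬝ᵥ u) / 2) • v := by
  have h := add_vecMulVec_mul_transpose_eq_iff Aᵀ hv u
  rwa [← transpose_vecMulVec, ← transpose_add, transpose_transpose, transpose_transpose,
    mulVec_transpose] at h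

theorem areGramMates_add_vecMulVec_iff (A : Matrix m n K) {u : m → K} {v : n → K}
    (hu : u ≠ 0) (hv : v ≠ 0) :
    AreGramMates A (A + vecMulVec u v) ↔
      A *ᵥ v = -((v ⬝ᵥ v) / 2) • u ∧ u ᵥ* A = -((u ⬝ᵥ u) / 2) • v := by
  have hE : vecMulVec u v ≠ 0 := fun h => by
    obtain ⟨i, hi⟩ := Function.ne_iff.mp hu
    obtain ⟨j, hj⟩ := Function.ne_iff.mp hv
    exact mul_ne_zero hi hj congr($h i j)
  rw [AreGramMates, eq_comm, add_vecMulVec_mul_transpose_eq_iff A hu, eq_comm (a := Aᵀ * A),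
    add_vecMulVec_transpose_mul_eq_iff A u hv]
  simp [hE]

end RankOnePerturbation

section PlusMinusVec

variable {R : Type*} [Ring R] {ι ι' κ κ' : Type*}

def plusMinusVec (R : Type*) [Ring R] (ι κ : Type*) : ι ⊕ (ι ⊕ κ) → R :=
  Sum.elim 1 (Sum.elim (-1) 0)

theorem plusMinusVec_ne_zero [Nontrivial R] [Nonempty ι] : plusMinusVec R ι κ ≠ 0 := fun h => by
  simpa [plusMinusVec] using congrFun h (Sum.inl (Classical.arbitrary ι))

theorem dotProduct_self_plusMinusVec [Fintype ι] [Fintype κ] :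
    plusMinusVec R ι κ ⬝ᵥ plusMinusVec R ι κ = 2 * Fintype.card ι := by
  simp [plusMinusVec, dotProduct, Fintype.sum_sum_type, two_mul]

theorem vecMulVec_plusMinusVec :
    vecMulVec (plusMinusVec R ι κ) (plusMinusVec R ι' κ') =
      fromBlocks (of fun _ _ => 1) (fromCols (-of fun _ _ => 1) 0) (fromRows (-of fun _ _ => 1) 0)
        (fromBlocks (of fun _ _ => 1) 0 0 0) := by
  ext (i | i | i) (j | j | j) <;> simp [plusMinusVec, vecMulVec]

theorem mulVec_plusMinusVec_eq_iff [Fintype ι'] [Fintype κ'] (X₁ X₂ : Matrix ι κ' R)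
    (X₃ X₄ : Matrix κ ι' R) (Y : Matrix κ κ' R) :
    fromBlocks 0 (fromCols (of fun _ _ => 1) X₁) (fromRows (of fun _ _ => 1) X₃)
        (fromBlocks 0 X₂ X₄ Y) *ᵥ plusMinusVec R ι' κ' =
      -(Fintype.card ι' : R) • plusMinusVec R ι κ ↔ X₃ *ᵥ 1 = X₄ *ᵥ 1 := by
  simp only [funext_iff, Sum.forall]
  simp [plusMinusVec, mulVec, dotProduct, Fintype.sum_sum_type, add_neg_eq_zero]

theorem plusMinusVec_vecMul_eq_iff [Fintype ι] [Fintype κ] (X₁ X₂ : Matrix ι κ' R)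
    (X₃ X₄ : Matrix κ ι' R) (Y : Matrix κ κ' R) :
    plusMinusVec R ι κ ᵥ* fromBlocks 0 (fromCols (of fun _ _ => 1) X₁)
        (fromRows (of fun _ _ => 1) X₃) (fromBlocks 0 X₂ X₄ Y) =
      -(Fintype.card ι : R) • plusMinusVec R ι' κ' ↔ 1 ᵥ* X₁ = 1 ᵥ* X₂ := by
  simp only [funext_iff, Sum.forall]
  simp [plusMinusVec, vecMul, dotProduct, Fintype.sum_sum_type, add_neg_eq_zero]

end PlusMinusVec

theorem stmt12 (k₁ k₂ p q : ℕ) (hk₁ : 0 < k₁) (hk₂ : 0 < k₂)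
    (X₁ X₂ : Matrix (Fin k₁) (Fin q) ℝ)
    (X₃ X₄ : Matrix (Fin p) (Fin k₂) ℝ)
    (Y : Matrix (Fin p) (Fin q) ℝ) :
    let J : Matrix (Fin k₁) (Fin k₂) ℝ := Matrix.of fun _ _ => 1
    let E : Matrix (Fin k₁ ⊕ (Fin k₁ ⊕ Fin p)) (Fin k₂ ⊕ (Fin k₂ ⊕ Fin q)) ℝ :=
      Matrix.fromBlocks J (Matrix.fromCols (-J) 0) (Matrix.fromRows (-J) 0)
        (Matrix.fromBlocks J 0 0 0)
    let A : Matrix (Fin k₁ ⊕ (Fin k₁ ⊕ Fin p)) (Fin k₂ ⊕ (Fin k₂ ⊕ Fin q)) ℝ :=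
      Matrix.fromBlocks 0 (Matrix.fromCols J X₁) (Matrix.fromRows J X₃)
        (Matrix.fromBlocks 0 X₂ X₄ Y)
    (∀ i j, A i j = 0 ∨ A i j = 1) →
    ((A * Aᵀ = (A + E) * (A + E)ᵀ ∧ Aᵀ * A = (A + E)ᵀ * (A + E) ∧ A ≠ A + E) ↔
      ((fun _ => 1) ᵥ* X₁ = (fun _ => 1) ᵥ* X₂ ∧
        X₃ *ᵥ (fun _ => 1) = X₄ *ᵥ (fun _ => 1))) := by
  intro J E A _
  have : Nonempty (Fin k₁) := ⟨⟨0, hk₁⟩⟩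
  have : Nonempty (Fin k₂) := ⟨⟨0, hk₂⟩⟩
  have hE : E = vecMulVec (plusMinusVec ℝ (Fin k₁) (Fin p)) (plusMinusVec ℝ (Fin k₂) (Fin q)) :=
    vecMulVec_plusMinusVec.symm
  change AreGramMates A (A + E) ↔ _
  rw [hE, areGramMates_add_vecMulVec_iff A plusMinusVec_ne_zero plusMinusVec_ne_zero,
    dotProduct_self_plusMinusVec, dotProduct_self_plusMinusVec,
    mul_div_cancel_left₀ _ two_ne_zero, mul_div_cancel_left₀ _ two_ne_zero, and_comm]
  exact and_congr (plusMinusVec_vecMul_eq_iff X₁ X₂ X₃ X₄ Y)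
    (mulVec_plusMinusVec_eq_iff X₁ X₂ X₃ X₄ Y)
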